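/- arXiv:2011.10124 — 4 statements merged into one kernel-verified Lean document; each statement's English description precedes it below -/
import Mathlib

section
/- Componentwise logarithmic inequality: for a, b > 0, (a − b) log(a/b) ≥ 2 (a − b)² / (a + b). -/
open Real

lemma sub_mul_log_div_comm (a b : ℝ) : (b - a) * log (b / a) = (a - b) * log (a / b) := by
  rw [← inv_div, log_inv]
  ring

lemma two_mul_sub_div_add_le_log_div {a b : ℝ} (hb : 0 < b) (hba : b ≤ a) :
    2 * (a - b) / (a + b) ≤ log (a / b) := by
  have h := le_log_one_add_of_nonneg (div_nonneg (sub_nonneg.2 hba) hb.le)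
  have hlhs : 2 * ((a - b) / b) / ((a - b) / b + 2) = 2 * (a - b) / (a + b) := by
    field_simp
    ring
  have hrhs : 1 + (a - b) / b = a / b := by
    field_simp
    ring
  rwa [hlhs, hrhs] at h

lemma two_mul_sq_div_add_le_sub_mul_log_div {a b : ℝ} (hb : 0 < b) (hba : b ≤ a) :
    2 * (a - b) ^ 2 / (a + b) ≤ (a - b) * log (a / b) :=
  calc 2 * (a - b) ^ 2 / (a + b) = (a - b) * (2 * (a - b) / (a + b)) := by ring
    _ ≤ (a - b) * log (a / b) :=
      mul_le_mul_of_nonneg_left (two_mul_sub_div_add_le_log_div hb hba) (sub_nonneg.2 hba)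

/-- Componentwise logarithmic inequality: for `a, b > 0`,
`(a − b) log(a/b) ≥ 2 (a − b)² / (a + b)`. -/
theorem log_ineq (a b : ℝ) (ha : 0 < a) (hb : 0 < b) :
    (a - b) * Real.log (a / b) ≥ 2 * (a - b) ^ 2 / (a + b) := by
  rcases le_total b a with hba | hab
  · exact two_mul_sq_div_add_le_sub_mul_log_div hb hba
  · rw [← sub_mul_log_div_comm, ← neg_sub b a, neg_sq, add_comm]
    exact two_mul_sq_div_add_le_sub_mul_log_div ha hab
end

section
/- Per-period competitive inequality: suppose x_t maximizes f_t(x) − μ_tᵀ b_t(x) over X_t, 0 ∈ X_t with f_t(0) = 0 and b_t(0) = 0, μ_t ≥ 0, and α ≥ 1 satisfies b_t(x)_j ≤ α ρ_j for all x ∈ X_t and resources j. Then for any x* ∈ X_t: α f_t(x_t) ≥ f_t(x*) − α μ_tᵀ (ρ − b_t(x_t)). -/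
/-- Per-period competitive inequality: if `x_t` maximizes `f_t(x) − μ_tᵀ b_t(x)` over
`X_t`, `0 ∈ X_t` with `f_t(0) = 0`, `b_t(0) = 0`, `μ_t ≥ 0`, and `α ≥ 1` satisfies
`b_t(x)_j ≤ α ρ_j` on `X_t`, then for any `x* ∈ X_t`,
`α f_t(x_t) ≥ f_t(x*) − α μ_tᵀ (ρ − b_t(x_t))`. -/
theorem per_period_competitive {d m : ℕ} (X : Set (Fin d → ℝ))
    (f : (Fin d → ℝ) → ℝ) (b : (Fin d → ℝ) → Fin m → ℝ)
    (ρ : Fin m → ℝ) (μ : Fin m → ℝ) (α : ℝ)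
    (h0 : (0 : Fin d → ℝ) ∈ X) (hf0 : f 0 = 0) (hb0 : b 0 = 0)
    (hf : ∀ x ∈ X, 0 ≤ f x)
    (hb : ∀ x ∈ X, ∀ j, 0 ≤ b x j)
    (hρ : ∀ j, 0 < ρ j)
    (hμ : ∀ j, 0 ≤ μ j)
    (hα1 : 1 ≤ α)
    (hαbd : ∀ x ∈ X, ∀ j, b x j ≤ α * ρ j)
    (xt : Fin d → ℝ) (hxt : xt ∈ X)
    (hargmax : ∀ x ∈ X, f x - ∑ j, μ j * b x j ≤ f xt - ∑ j, μ j * b xt j) :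
    ∀ xstar ∈ X,
      α * f xt ≥ f xstar - α * ∑ j, μ j * (ρ j - b xt j) := by
  intro xs hxs
  have hargx := hargmax xs hxs
  have h0' := hargmax 0 h0
  rw [hf0, hb0] at h0'
  have hnn : 0 ≤ f xt - ∑ j, μ j * b xt j := by simpa using h0'
  have hSs : ∑ j, μ j * b xs j ≤ α * ∑ j, μ j * ρ j := by
    rw [Finset.mul_sum]
    refine Finset.sum_le_sum fun j _ => ?_
    calc μ j * b xs j ≤ μ j * (α * ρ j) :=
          mul_le_mul_of_nonneg_left (hαbd xs hxs j) (hμ j)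
      _ = α * (μ j * ρ j) := by ring
  have hαm : f xt - ∑ j, μ j * b xt j ≤ α * (f xt - ∑ j, μ j * b xt j) :=
    le_mul_of_one_le_left hnn hα1
  have hexpand : ∑ j, μ j * (ρ j - b xt j)
      = ∑ j, μ j * ρ j - ∑ j, μ j * b xt j := by
    rw [← Finset.sum_sub_distrib]; exact Finset.sum_congr rfl fun j _ => by ring
  rw [ge_iff_le, hexpand, mul_sub α]
  rw [mul_sub α] at hαm
  linarith
end

section
/- Stopping-time bound via dual updates: suppose gradients satisfy ∇h_j(μ_{t+1,j}) ≥ ∇h_j(μ_{t,j}) − η g_{t,j} for all t ≤ τ, that the iterates satisfy μ_{t,j} ≤ μ̄_j, and that at the stopping time τ there exists a resource j with Σ_{t=1}^{τ} b_t(x_t)_j + b̄ ≥ ρ_j T, where g_{t,j} = ρ_j − b_t(x_t)_j. Then T − τ ≤ (1/(η ρ_j)) (∇h_j(μ̄_j) − ∇h_j(μ_{1,j})) + b̄/ρ_j. -/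
/-- Stopping-time bound via dual updates (coordinate `j`): if the dual gradients
satisfy `∇h_j(μ_{t+1}) ≥ ∇h_j(μ_t) − η g_t` with `g_t = ρ_j − b_t`, the iterates
stay in `[0, μ̄_j]`, `∇h_j` is increasing, and at the stopping time `τ` we have
`Σ_{t=1}^τ b_t + b̄ ≥ ρ_j T`, then
`T − τ ≤ (1/(η ρ_j)) (∇h_j(μ̄_j) − ∇h_j(μ_1)) + b̄/ρ_j`. -/
theorem stopping_time_bound (dh : ℝ → ℝ) (hdh : Monotone dh)
    (T τ : ℕ) (hτT : τ ≤ T)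
    (η ρj bbar μbar : ℝ) (hη : 0 < η) (hρj : 0 < ρj)
    (bt : ℕ → ℝ) (μ : ℕ → ℝ)
    (hbnn : ∀ t, 0 ≤ bt t) (hbub : ∀ t, bt t ≤ bbar)
    (hμbd : ∀ t, 1 ≤ t → t ≤ τ + 1 → 0 ≤ μ t ∧ μ t ≤ μbar)
    (hupd : ∀ t, 1 ≤ t → t ≤ τ → dh (μ (t + 1)) ≥ dh (μ t) - η * (ρj - bt t))
    (hstop : (∑ t ∈ Finset.Icc 1 τ, bt t) + bbar ≥ ρj * T) :
    (T : ℝ) - τ ≤ 1 / (η * ρj) * (dh μbar - dh (μ 1)) + bbar / ρj := by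
  have key : ∀ n, n ≤ τ → dh (μ (n + 1)) ≥ dh (μ 1) - η * ∑ t ∈ Finset.Icc 1 n, (ρj - bt t) := by
    intro n
    induction n with
    | zero => intro _; simp
    | succ m ih =>
      intro hm
      have h1 := ih (Nat.le_of_succ_le hm)
      have h2 := hupd (m + 1) (Nat.le_add_left 1 m) hm
      rw [Finset.sum_Icc_succ_top (by omega : 1 ≤ m + 1)]
      have : η * (∑ t ∈ Finset.Icc 1 m, (ρj - bt t) + (ρj - bt (m+1)))
          = η * ∑ t ∈ Finset.Icc 1 m, (ρj - bt t) + η * (ρj - bt (m+1)) := by ring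
      rw [this]
      linarith
  have hk := key τ le_rfl
  have hμb : μ (τ + 1) ≤ μbar := (hμbd (τ + 1) (by omega) le_rfl).2
  have hdhb : dh (μ (τ + 1)) ≤ dh μbar := hdh hμb
  have hsum : ∑ t ∈ Finset.Icc 1 τ, (ρj - bt t)
      = ρj * τ - ∑ t ∈ Finset.Icc 1 τ, bt t := by
    rw [Finset.sum_sub_distrib, Finset.sum_const, Nat.card_Icc]
    simp [mul_comm]
  rw [hsum] at hk
  -- From hk: dh μbar ≥ dh (μ 1) - η * (ρj * τ - S), so S ≤ (dh μbar - dh μ1)/η + ρj τ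
  have hS : ρj * T - bbar - ρj * τ ≤ (dh μbar - dh (μ 1)) / η := by
    rw [le_div_iff₀ hη]
    nlinarith [hstop]
  have hpos : 0 < η * ρj := mul_pos hη hρj
  have goal2 : ρj * ((T : ℝ) - τ) ≤ ρj * (1 / (η * ρj) * (dh μbar - dh (μ 1)) + bbar / ρj) := by
    have : ρj * (1 / (η * ρj) * (dh μbar - dh (μ 1)) + bbar / ρj)
        = (dh μbar - dh (μ 1)) / η + bbar := by
      field_simp
    rw [this]
    nlinarith [hS]
  exact le_of_mul_le_mul_left goal2 hρj
end

section
/- Invariance of bounded dual multipliers under mirror descent: let h_j be σ₂-strongly convex on [0, μ̄_j] with μ̄_j = f̄/ρ_j + 1, and suppose the update satisfies ∇h_j(μ⁺_j) = ∇h_j(μ_j) + η b_j(x̃) − η ρ_j whenever μ⁺_j > 0, where b_j(x̃) ≤ min(f̄/μ_j, b̄). If μ_j ≤ μ̄_j and η ≤ σ₂/b̄, then μ⁺_j ≤ μ̄_j. -/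
/-- Invariance of bounded dual multipliers under mirror descent (coordinate `j`):
with `h_j` σ₂-strongly convex on `[0, μ̄_j]`, `μ̄_j = f̄/ρ_j + 1`, conjugate
derivative `ds` increasing, `(1/σ₂)`-Lipschitz and inverting `dh`, the mirror
descent update stays below `μ̄_j` whenever `μ_j ≤ μ̄_j` and `η ≤ σ₂/b̄`. -/
theorem dual_invariance (fbar ρj bbar σ₂ η : ℝ)
    (hfbar : 0 < fbar) (hρj : 0 < ρj) (hbbar : 0 < bbar) (hσ₂ : 0 < σ₂)
    (hη : 0 < η) (hηs : η ≤ σ₂ / bbar)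
    (μbar : ℝ) (hμbar : μbar = fbar / ρj + 1)
    (dh ds : ℝ → ℝ)
    (hdh : Monotone dh) (hds : Monotone ds)
    (hinv : ∀ u, 0 ≤ u → u ≤ μbar → ds (dh u) = u)
    (hlip : ∀ u v, |ds u - ds v| ≤ 1 / σ₂ * |u - v|)
    (μj : ℝ) (hμj0 : 0 ≤ μj) (hμjub : μj ≤ μbar)
    (bx : ℝ) (hbx0 : 0 ≤ bx) (hbxb : bx ≤ bbar)
    (hbxf : 0 < μj → bx ≤ fbar / μj)
    (μplus : ℝ) (hμplus0 : 0 ≤ μplus)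
    (hupd : 0 < μplus → dh μplus = dh μj + η * bx - η * ρj) :
    μplus ≤ μbar := by
  by_contra hcon
  push_neg at hcon
  have hμbarpos : 0 < μbar := by
    rw [hμbar]; positivity
  have hμpluspos : 0 < μplus := lt_trans hμbarpos hcon
  have hupd' := hupd hμpluspos
  have hmono : dh μbar ≤ dh μplus := hdh hcon.le
  -- strong convexity: dh μbar - dh μj ≥ σ₂ * (μbar - μj)
  have hdhle : dh μj ≤ dh μbar := hdh hμjub
  have hsc : σ₂ * (μbar - μj) ≤ dh μbar - dh μj := by
    have h1 := hlip (dh μbar) (dh μj)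
    rw [hinv μbar hμbarpos.le le_rfl, hinv μj hμj0 hμjub] at h1
    rw [abs_of_nonneg (by linarith), abs_of_nonneg (by linarith)] at h1
    rw [div_mul_eq_mul_div, le_div_iff₀ hσ₂] at h1
    nlinarith
  -- key strict inequality: dh μplus < dh μbar
  have hkey : dh μplus < dh μbar := by
    rw [hupd']
    rcases le_or_gt μj (fbar / ρj) with hc | hc
    · -- μbar - μj ≥ 1, and η * bx ≤ σ₂
      have h2 : η * bx ≤ σ₂ := by
        have : η * bx ≤ η * bbar := by nlinarith
        have h6 : η * bbar ≤ σ₂ := by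
          rw [le_div_iff₀ hbbar] at hηs; linarith
        linarith
      have h3 : (1:ℝ) ≤ μbar - μj := by rw [hμbar]; linarith
      nlinarith
    · -- bx ≤ fbar / μj < ρj
      have hμjpos : 0 < μj := lt_trans (by positivity) hc
      have h4 : bx < ρj := by
        have := hbxf hμjpos
        have h5 : fbar / μj < ρj := by
          rw [div_lt_iff₀ hμjpos]
          rw [div_lt_iff₀ hρj] at hc
          nlinarith
        linarith
      nlinarith
  linarith
end
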